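/- Let g : ℝⁿ → ℝ be concave with supergradient v at x, and suppose additionally g is globally (ρ, ε)-bounded nonconvex at x, i.e., g(x) ≤ g(y) + ⟨x − y, v⟩ + (ρ/2)∥x − y∥² + ε for all y. Then for any d ∈ ℝⁿ and positive integers k ≤ n, the average over all k-element subsets B of g(x + d_B) is at most g(x) + (k/n)·( g(x + d) − g(x) + (ρ/2)∥d∥₂² + ε ). -/

import Mathlib

open scoped RealInnerProductSpace
open Finset

theorem count_aux {n k : ℕ} (hk : 0 < k) (i : Fin n) :
    ((powersetCard k (univ : Finset (Fin n))).filter (fun B => i ∈ B)).card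
      = (n-1).choose (k-1) := by
  have h := Finset.card_powersetCard (k-1) ((univ : Finset (Fin n)).erase i)
  rw [Finset.card_erase_of_mem (mem_univ i), card_univ, Fintype.card_fin] at h
  rw [← h]
  refine Finset.card_bij' (fun B _ => B.erase i) (fun s _ => insert i s) ?_ ?_ ?_ ?_
  · intro B hB
    simp only [mem_filter, mem_powersetCard] at hB
    simp only [mem_powersetCard]
    constructor
    · intro j hj
      rw [Finset.mem_erase] at hj ⊢
      exact ⟨hj.1, mem_univ j⟩
    · rw [Finset.card_erase_of_mem hB.2, hB.1.2]
  · intro s hs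
    simp only [mem_powersetCard] at hs
    have hi : i ∉ s := fun hi => (Finset.mem_erase.1 (hs.1 hi)).1 rfl
    simp only [mem_filter, mem_powersetCard]
    refine ⟨⟨fun j _ => mem_univ j, ?_⟩, Finset.mem_insert_self i s⟩
    rw [Finset.card_insert_of_notMem hi, hs.2]
    omega
  · intro B hB
    simp only [mem_filter] at hB
    exact Finset.insert_erase hB.2
  · intro s hs
    simp only [mem_powersetCard] at hs
    exact Finset.erase_insert fun hi => (Finset.mem_erase.1 (hs.1 hi)).1 rfl

theorem average_concave_block_update_bounded_nonconvex {n : ℕ} (k : ℕ)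
    (hk : 0 < k) (hkn : k ≤ n) (ρ ε : ℝ)
    (g : EuclideanSpace ℝ (Fin n) → ℝ) (hg : ConcaveOn ℝ Set.univ g)
    (x d v : EuclideanSpace ℝ (Fin n))
    (hv : ∀ y, g y ≤ g x + ⟪y - x, v⟫)
    (hbn : ∀ y, g x ≤ g y + ⟪x - y, v⟫ + ρ / 2 * ‖x - y‖ ^ 2 + ε) :
    (1 / (n.choose k : ℝ)) *
        ∑ B ∈ Finset.powersetCard k (Finset.univ : Finset (Fin n)),
          g (WithLp.toLp 2 (fun i => if i ∈ B then x i + d i else x i)) ≤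
      g x + ((k : ℝ) / n) * (g (x + d) - g x + ρ / 2 * ‖d‖ ^ 2 + ε) := by
  have hn : 0 < n := lt_of_lt_of_le hk hkn
  have hC : (0 : ℝ) < (n.choose k : ℝ) := by
    exact_mod_cast Nat.choose_pos hkn
  -- step 1: per-subset bound
  have step1 : ∀ B ∈ powersetCard k (univ : Finset (Fin n)),
      g (WithLp.toLp 2 (fun i => if i ∈ B then x i + d i else x i)) ≤ g x + ∑ i ∈ B, d i * v i := by
    intro B _
    have := hv (WithLp.toLp 2 (fun i => if i ∈ B then x i + d i else x i))
    refine this.trans_eq ?_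
    congr 1
    simp only [PiLp.inner_apply, PiLp.sub_apply, RCLike.inner_apply, conj_trivial]
    have heq : ∀ i ∈ (univ : Finset (Fin n)),
        ((if i ∈ B then x i + d i else x i) - x i) * v i
          = if i ∈ B then d i * v i else 0 := by
      intro i _
      by_cases h : i ∈ B <;> simp [h]
    simp_rw [mul_comm (WithLp.ofLp v _)]
    rw [Finset.sum_congr rfl heq, Finset.sum_ite_mem, Finset.univ_inter]
  -- step 2: sum the bounds
  have hsum : ∑ B ∈ powersetCard k (univ : Finset (Fin n)),
      g (WithLp.toLp 2 (fun i => if i ∈ B then x i + d i else x i))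
      ≤ (n.choose k : ℝ) * g x + ((n-1).choose (k-1) : ℝ) * ∑ i, d i * v i := by
    calc ∑ B ∈ powersetCard k (univ : Finset (Fin n)),
        g (WithLp.toLp 2 (fun i => if i ∈ B then x i + d i else x i))
        ≤ ∑ B ∈ powersetCard k (univ : Finset (Fin n)), (g x + ∑ i ∈ B, d i * v i) :=
          Finset.sum_le_sum step1
      _ = (n.choose k : ℝ) * g x + ((n-1).choose (k-1) : ℝ) * ∑ i, d i * v i := by
          rw [Finset.sum_add_distrib, Finset.sum_const, Finset.card_powersetCard,
            card_univ, Fintype.card_fin, nsmul_eq_mul]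
          congr 1
          have h1 : ∀ B ∈ powersetCard k (univ : Finset (Fin n)),
              ∑ i ∈ B, d i * v i = ∑ i ∈ univ, if i ∈ B then d i * v i else 0 := by
            intro B _; rw [Finset.sum_ite_mem, Finset.univ_inter]
          rw [Finset.sum_congr rfl h1, Finset.sum_comm, Finset.mul_sum]
          refine Finset.sum_congr rfl fun i _ => ?_
          rw [← Finset.sum_filter, Finset.sum_const, count_aux hk i, nsmul_eq_mul]
  -- step 3: bound the inner product via hbn
  have hS : ∑ i, d i * v i ≤ g (x + d) - g x + ρ / 2 * ‖d‖ ^ 2 + ε := by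
    have h := hbn (x + d)
    have h1 : x - (x + d) = -d := by abel
    rw [h1, inner_neg_left, norm_neg] at h
    have h2 : ⟪d, v⟫ = ∑ i, d i * v i := by
      simp [PiLp.inner_apply, RCLike.inner_apply, mul_comm]
    rw [h2] at h
    linarith
  have hfrac : ((n-1).choose (k-1) : ℝ) / (n.choose k : ℝ) = (k : ℝ) / n := by
    have hnat : k * n.choose k = n * (n-1).choose (k-1) := by
      obtain ⟨m, rfl⟩ : ∃ m, n = m + 1 := ⟨n - 1, by omega⟩
      obtain ⟨j, rfl⟩ : ∃ j, k = j + 1 := ⟨k - 1, by omega⟩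
      simpa [Nat.mul_comm] using (Nat.add_one_mul_choose_eq m j).symm
    have hnR : (0 : ℝ) < (n : ℝ) := by exact_mod_cast hn
    field_simp
    have : (k : ℝ) * (n.choose k : ℝ) = (n : ℝ) * ((n-1).choose (k-1) : ℝ) := by
      exact_mod_cast hnat
    linarith
  have hkn0 : (0 : ℝ) ≤ (k : ℝ) / n := by positivity
  calc (1 / (n.choose k : ℝ)) *
        ∑ B ∈ powersetCard k (univ : Finset (Fin n)),
          g (WithLp.toLp 2 (fun i => if i ∈ B then x i + d i else x i))
      ≤ (1 / (n.choose k : ℝ)) *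
          ((n.choose k : ℝ) * g x + ((n-1).choose (k-1) : ℝ) * ∑ i, d i * v i) := by
        apply mul_le_mul_of_nonneg_left hsum (by positivity)
    _ = g x + (((n-1).choose (k-1) : ℝ) / (n.choose k : ℝ)) * ∑ i, d i * v i := by
        field_simp
    _ = g x + ((k : ℝ) / n) * ∑ i, d i * v i := by rw [hfrac]
    _ ≤ g x + ((k : ℝ) / n) * (g (x + d) - g x + ρ / 2 * ‖d‖ ^ 2 + ε) := by
        exact add_le_add_right (mul_le_mul_of_nonneg_left hS hkn0) _
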